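/- Let p ≥ 1 and q ≥ 0 with 2p + q ≥ 3, set n = 2(p−1) + q, and let S_{p,q} be the (n+2)×(n+2) real symmetric matrix with block form [[0,0,K_p],[0,1_q,0],[K_p,0,0]] (middle row and column deleted when q = 0), where K_m is the m×m matrix with (i,j)-entry δ_{i,m+1−j}. Let 𝔤 = {X ∈ 𝔰𝔩(n+2,ℂ) : X*·S_{p,q} + S_{p,q}·X = 0}, a real Lie algebra isomorphic to 𝔰𝔲(p+q,p). Let 𝔤₋₂ = {X ∈ 𝔤 : the only nonzero entry of X is the (n+2,1)-entry, which lies in iℝ} and 𝔤₋₁ = {X ∈ 𝔤 : the only nonzero blocks of X are a column u ∈ ℂⁿ in rows 2,…,n+1 of column 1 and the row −u*·S_{p−1,q} in columns 2,…,n+1 of row n+2} (with S_{0,m} = 1_m), and set 𝔤₋ = 𝔤₋₂ ⊕ 𝔤₋₁ with scalar product ⟨X|Y⟩ = 2·Re·tr(X·S_{p,q}·Y*) for X,Y ∈ 𝔤₋₁, ⟨X|Y⟩ = Re·tr(X·Y*) for X,Y ∈ 𝔤₋₂, and ⟨𝔤₋₁|𝔤₋₂⟩ = 0. Then 𝔤₋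 is a Lie subalgebra of 𝔤 with ⁅𝔤₋₁,𝔤₋₁⁆ ⊆ 𝔤₋₂ and 𝔤₋₂ central in 𝔤₋, (𝔤₋, ⟨·|·⟩) is a pseudo H-type Lie algebra, and there exists a Lie algebra isomorphism of 𝔥⁽¹⁾(ℂ, S_{p−1,q}) onto 𝔤₋ that is an isometry for the scalar products. -/
import Mathlib


noncomputable section

/-- The real symmetric matrix `S_{p,q}` of order `2p+q`, with block form
`[[0,0,K_p],[0,1_q,0],[K_p,0,0]]` (0-indexed: the antidiagonal corner blocks,
and the identity on the middle block), viewed as a complex matrix. -/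
def Sc (p q : ℕ) : Matrix (Fin (2*p+q)) (Fin (2*p+q)) ℂ := fun i j =>
  if (i : ℕ) + (j : ℕ) + 1 = 2*p+q ∧ ((i : ℕ) < p ∨ p + q ≤ (i : ℕ)) then 1
  else if i = j ∧ p ≤ (i : ℕ) ∧ (i : ℕ) < p + q then 1
  else 0

/-- The inner matrix `S_{p-1,q}` of order `n = 2(p-1)+q`. -/
def Sc' (p q : ℕ) : Matrix (Fin (2*(p-1)+q)) (Fin (2*(p-1)+q)) ℂ := fun i j =>
  if (i : ℕ) + (j : ℕ) + 1 = 2*(p-1)+q ∧ ((i : ℕ) < p - 1 ∨ (p-1) + q ≤ (i : ℕ)) then 1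
  else if i = j ∧ p - 1 ≤ (i : ℕ) ∧ (i : ℕ) < (p-1) + q then 1
  else 0

/-- `𝔤 = {X ∈ 𝔰𝔩(n+2,ℂ) : X*·S_{p,q} + S_{p,q}·X = 0}`, isomorphic to 𝔰𝔲(p+q,p). -/
def Gset (p q : ℕ) : Set (Matrix (Fin (2*p+q)) (Fin (2*p+q)) ℂ) :=
  {X | Matrix.trace X = 0 ∧ X.conjTranspose * Sc p q + Sc p q * X = 0}

/-- The parametrization of `𝔤₋₂`: the single entry `t·i ∈ iℝ` in position
`(n+2, 1)` (0-indexed: `(2p+q-1, 0)`). -/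
def emb2 (p q : ℕ) (t : ℝ) : Matrix (Fin (2*p+q)) (Fin (2*p+q)) ℂ := fun i j =>
  if (i : ℕ) = 2*p+q - 1 ∧ (j : ℕ) = 0 then (t : ℂ) * Complex.I else 0

/-- The parametrization of `𝔤₋₁`: the column `u ∈ ℂⁿ` in rows `2,…,n+1` of
column `1`, and the row `-u*·S_{p-1,q}` in columns `2,…,n+1` of row `n+2`
(0-indexed as below). -/
def emb1 (p q : ℕ) (u : Fin (2*(p-1)+q) → ℂ) :
    Matrix (Fin (2*p+q)) (Fin (2*p+q)) ℂ := fun i j =>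
  if h : (j : ℕ) = 0 ∧ 1 ≤ (i : ℕ) ∧ (i : ℕ) ≤ 2*(p-1)+q then
    u ⟨(i : ℕ) - 1, by omega⟩
  else if h' : (i : ℕ) = 2*p+q - 1 ∧ 1 ≤ (j : ℕ) ∧ (j : ℕ) ≤ 2*(p-1)+q then
    -(∑ k, star (u k) * Sc' p q k ⟨(j : ℕ) - 1, by omega⟩)
  else 0

/-- `𝔤₋ = 𝔤₋₂ ⊕ 𝔤₋₁`. -/
def gneg (p q : ℕ) : Set (Matrix (Fin (2*p+q)) (Fin (2*p+q)) ℂ) :=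
  {X | ∃ (u : Fin (2*(p-1)+q) → ℂ) (t : ℝ), X = emb1 p q u + emb2 p q t}

/-- Projection onto the `𝔤₋₂`-component (the imaginary part of the
`(2p+q-1, 0)` entry). -/
def P2m (p q : ℕ) (X : Matrix (Fin (2*p+q)) (Fin (2*p+q)) ℂ) :
    Matrix (Fin (2*p+q)) (Fin (2*p+q)) ℂ := fun i j =>
  if (i : ℕ) = 2*p+q - 1 ∧ (j : ℕ) = 0 then ((X i j).im : ℂ) * Complex.I else 0

/-- Projection onto the `𝔤₋₁`-component. -/
def P1m (p q : ℕ) (X : Matrix (Fin (2*p+q)) (Fin (2*p+q)) ℂ) :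
    Matrix (Fin (2*p+q)) (Fin (2*p+q)) ℂ :=
  X - P2m p q X

/-- The scalar product on `𝔤₋`: `⟨X|Y⟩ = 2·Re·tr(X·S_{p,q}·Y*)` on `𝔤₋₁`,
`⟨X|Y⟩ = Re·tr(X·Y*)` on `𝔤₋₂`, and `⟨𝔤₋₁|𝔤₋₂⟩ = 0`. -/
def BM (p q : ℕ) (X Y : Matrix (Fin (2*p+q)) (Fin (2*p+q)) ℂ) : ℝ :=
  2 * (Matrix.trace (P1m p q X * Sc p q * (P1m p q Y).conjTranspose)).re +
    (Matrix.trace (P2m p q X * (P2m p q Y).conjTranspose)).re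

/-- `x·S·(conj y)ᵗ` for complex row vectors and a complex matrix `S`. -/
def qcC {n : ℕ} (S : Matrix (Fin n) (Fin n) ℂ) (x y : Fin n → ℂ) : ℂ :=
  ∑ i, ∑ j, x i * S i j * star (y j)

/-- The bracket of the model `𝔥⁽¹⁾(ℂ, S_{p-1,q}) = ℂⁿ ⊕ iℝ`
(`iℝ` being coordinatized by `ℝ`, `t ↦ t·i`):
`⁅x, y⁆ = y·S·x* - x·S·y* ∈ iℝ`. -/
def brM (p q : ℕ) (a b : (Fin (2*(p-1)+q) → ℂ) × ℝ) : (Fin (2*(p-1)+q) → ℂ) × ℝ :=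
  (0, (qcC (Sc' p q) b.1 a.1 - qcC (Sc' p q) a.1 b.1).im)

/-- The scalar product of the model `𝔥⁽¹⁾(ℂ, S_{p-1,q})`: `2Re(x·S·y*)` on `ℂⁿ`,
`Re(z·conj w)` on `iℝ` (which is `t·s` for `z = t·i`, `w = s·i`). -/
def BMc (p q : ℕ) (a b : (Fin (2*(p-1)+q) → ℂ) × ℝ) : ℝ :=
  2 * (qcC (Sc' p q) a.1 b.1).re + a.2 * b.2

section Aux

/-- The permutation underlying `S_{p,q}` (on natural number indices). -/
def sigN (p q i : ℕ) : ℕ := if p ≤ i ∧ i < p + q then i else 2*p+q-1-i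

/-- The permutation underlying `S_{p,q}` as a map `Fin (2p+q) → Fin (2p+q)`. -/
def sigF (p q : ℕ) (j : Fin (2*p+q)) : Fin (2*p+q) :=
  ⟨sigN p q j, by have := j.isLt; simp only [sigN]; split_ifs <;> omega⟩

lemma sigN_invol (p q i : ℕ) (h : i < 2*p+q) : sigN p q (sigN p q i) = i := by
  simp only [sigN]; split_ifs <;> omega

lemma sigF_invol (p q : ℕ) : Function.Involutive (sigF p q) := by
  intro j; apply Fin.ext; exact sigN_invol p q j j.isLt

lemma Sc_apply (p q : ℕ) (i j : Fin (2*p+q)) :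
    Sc p q i j = if (i:ℕ) = sigN p q (j:ℕ) then 1 else 0 := by
  have hi := i.isLt; have hj := j.isLt
  simp only [Sc, sigN, Fin.ext_iff]
  split_ifs <;> first | rfl | omega

lemma Sc'_eq (p q : ℕ) : Sc' p q = Sc (p-1) q := rfl

lemma Sc_apply' (p q : ℕ) (i j : Fin (2*p+q)) :
    Sc p q i j = if (j:ℕ) = sigN p q (i:ℕ) then 1 else 0 := by
  have hi := i.isLt; have hj := j.isLt
  rw [Sc_apply]
  by_cases h : (i:ℕ) = sigN p q (j:ℕ)
  · rw [if_pos h, if_pos]; rw [h, sigN_invol p q j hj]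
  · rw [if_neg h, if_neg]; intro hc
    exact h (by rw [hc, sigN_invol p q i hi])

lemma mul_Sc (p q : ℕ) (A : Matrix (Fin (2*p+q)) (Fin (2*p+q)) ℂ) (i j : Fin (2*p+q)) :
    (A * Sc p q) i j = A i (sigF p q j) := by
  rw [Matrix.mul_apply]
  have : ∀ k, A i k * Sc p q k j = if k = sigF p q j then A i k else 0 := by
    intro k
    rw [Sc_apply']
    by_cases h : k = sigF p q j
    · rw [if_pos, if_pos h, mul_one]; rw [h]
      exact (sigN_invol p q j j.isLt).symm
    · rw [if_neg, if_neg h, mul_zero]; intro hc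
      refine h (Fin.ext ?_)
      show (k:ℕ) = sigN p q (j:ℕ)
      rw [hc]; exact (sigN_invol p q k k.isLt).symm
  simp only [this, Finset.sum_ite_eq', Finset.mem_univ, if_true]

lemma Sc_mul (p q : ℕ) (A : Matrix (Fin (2*p+q)) (Fin (2*p+q)) ℂ) (i j : Fin (2*p+q)) :
    (Sc p q * A) i j = A (sigF p q i) j := by
  rw [Matrix.mul_apply]
  have : ∀ k, Sc p q i k * A k j = if k = sigF p q i then A k j else 0 := by
    intro k
    rw [Sc_apply]
    by_cases h : k = sigF p q i
    · rw [if_pos, if_pos h, one_mul]; rw [h]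
      exact (sigN_invol p q i i.isLt).symm
    · rw [if_neg, if_neg h, zero_mul]; intro hc
      refine h (Fin.ext ?_)
      show (k:ℕ) = sigN p q (i:ℕ)
      rw [hc]; exact (sigN_invol p q k k.isLt).symm
  simp only [this, Finset.sum_ite_eq', Finset.mem_univ, if_true]

lemma sigN_zero (p q : ℕ) (hp : 1 ≤ p) : sigN p q 0 = 2*p+q-1 := by
  simp only [sigN]; split_ifs <;> omega

lemma sigN_last (p q : ℕ) (hp : 1 ≤ p) : sigN p q (2*p+q-1) = 0 := by
  simp only [sigN]; split_ifs <;> omega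

lemma sigN_mid (p q i : ℕ) (hp : 1 ≤ p) (h1 : 1 ≤ i) (h2 : i ≤ 2*(p-1)+q) :
    1 ≤ sigN p q i ∧ sigN p q i ≤ 2*(p-1)+q := by
  simp only [sigN]; split_ifs <;> omega

lemma sigN_shift (p q i : ℕ) (hp : 1 ≤ p) (h1 : 1 ≤ i) (h2 : i ≤ 2*(p-1)+q) :
    sigN p q i = sigN (p-1) q (i-1) + 1 := by
  simp only [sigN]; split_ifs <;> omega

/-- Sum over `Fin N` of a function vanishing at `0` and `N-1`. -/
lemma sum_shift {n N : ℕ} (hN : n + 2 = N) (f : Fin N → ℂ) (g : Fin n → ℂ)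
    (h0 : ∀ k : Fin N, (k:ℕ) = 0 ∨ (k:ℕ) = N-1 → f k = 0)
    (hmid : ∀ (k : Fin N) (h1 : 1 ≤ (k:ℕ)) (h2 : (k:ℕ) ≤ n),
      f k = g ⟨(k:ℕ)-1, by omega⟩) :
    ∑ k, f k = ∑ m, g m := by
  subst hN
  rw [Fin.sum_univ_succ, Fin.sum_univ_castSucc]
  rw [h0 0 (Or.inl rfl), h0 ((Fin.last n).succ) (Or.inr (by simp [Fin.last]))]
  rw [zero_add, add_zero]
  refine Finset.sum_congr rfl (fun m _ => ?_)
  rw [hmid (m.castSucc.succ) (by simp) (by have := m.isLt; simp)]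
  exact congrArg g (Fin.ext (by simp))

lemma emb1_col (p q : ℕ) (u : Fin (2*(p-1)+q) → ℂ) (i j : Fin (2*p+q))
    (hj : (j:ℕ) = 0) (h1 : 1 ≤ (i:ℕ)) (h2 : (i:ℕ) ≤ 2*(p-1)+q) :
    emb1 p q u i j = u ⟨(i:ℕ)-1, by omega⟩ := by
  rw [emb1, dif_pos ⟨hj, h1, h2⟩]

lemma emb1_zero (p q : ℕ) (u : Fin (2*(p-1)+q) → ℂ) (i j : Fin (2*p+q))
    (hc : ¬((j:ℕ) = 0 ∧ 1 ≤ (i:ℕ) ∧ (i:ℕ) ≤ 2*(p-1)+q))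
    (hr : ¬((i:ℕ) = 2*p+q-1 ∧ 1 ≤ (j:ℕ) ∧ (j:ℕ) ≤ 2*(p-1)+q)) :
    emb1 p q u i j = 0 := by
  rw [emb1, dif_neg hc, dif_neg hr]

lemma emb1_row (p q : ℕ) (hp : 1 ≤ p) (u : Fin (2*(p-1)+q) → ℂ) (i j : Fin (2*p+q))
    (hi : (i:ℕ) = 2*p+q-1) (h1 : 1 ≤ (j:ℕ)) (h2 : (j:ℕ) ≤ 2*(p-1)+q) :
    emb1 p q u i j = -star (u (sigF (p-1) q ⟨(j:ℕ)-1, by omega⟩)) := by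
  rw [emb1, dif_neg (by omega), dif_pos ⟨hi, h1, h2⟩]
  congr 1
  have key : ∀ k, star (u k) * Sc' p q k ⟨(j:ℕ)-1, by omega⟩ =
      if k = sigF (p-1) q ⟨(j:ℕ)-1, by omega⟩ then star (u k) else 0 := by
    intro k
    rw [Sc'_eq, Sc_apply]
    by_cases h : k = sigF (p-1) q ⟨(j:ℕ)-1, by omega⟩
    · rw [if_pos h, if_pos, mul_one]
      rw [h]; rfl
    · rw [if_neg h, if_neg, mul_zero]
      intro hc
      exact h (Fin.ext hc)
  simp only [key, Finset.sum_ite_eq', Finset.mem_univ, if_true]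

lemma qcC_eq (p q : ℕ) (u v : Fin (2*(p-1)+q) → ℂ) :
    qcC (Sc' p q) u v = ∑ j, u (sigF (p-1) q j) * star (v j) := by
  rw [qcC, Finset.sum_comm]
  refine Finset.sum_congr rfl (fun j _ => ?_)
  have key : ∀ i, u i * Sc' p q i j * star (v j) =
      if i = sigF (p-1) q j then u i * star (v j) else 0 := by
    intro i
    rw [Sc'_eq, Sc_apply]
    by_cases h : i = sigF (p-1) q j
    · rw [if_pos h, if_pos (show (i:ℕ) = sigN (p-1) q (j:ℕ) by rw [h]; rfl)]
      ring
    · rw [if_neg h, if_neg (show ¬((i:ℕ) = sigN (p-1) q (j:ℕ)) from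
        fun hc => h (Fin.ext hc)), mul_zero, zero_mul]
  simp only [key, Finset.sum_ite_eq', Finset.mem_univ, if_true]

lemma qcC_eq' (p q : ℕ) (u v : Fin (2*(p-1)+q) → ℂ) :
    qcC (Sc' p q) u v = ∑ j, u j * star (v (sigF (p-1) q j)) := by
  rw [qcC_eq]
  refine Fintype.sum_equiv (Function.Involutive.toPerm _ (sigF_invol (p-1) q)) _ _ (fun x => ?_)
  show u (sigF (p-1) q x) * star (v x) =
    u (sigF (p-1) q x) * star (v (sigF (p-1) q (sigF (p-1) q x)))
  rw [sigF_invol (p-1) q x]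

lemma star_qcC (p q : ℕ) (u v : Fin (2*(p-1)+q) → ℂ) :
    star (qcC (Sc' p q) u v) = qcC (Sc' p q) v u := by
  rw [qcC_eq, qcC_eq']
  rw [star_sum]
  refine Finset.sum_congr rfl (fun j _ => ?_)
  rw [star_mul', star_star]
  ring

lemma qcC_zero_right (p q : ℕ) (u : Fin (2*(p-1)+q) → ℂ) :
    qcC (Sc' p q) u (fun _ => 0) = 0 := by
  simp [qcC]

lemma qcC_zero_left (p q : ℕ) (v : Fin (2*(p-1)+q) → ℂ) :
    qcC (Sc' p q) (fun _ => 0) v = 0 := by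
  simp [qcC]

lemma qcC_smul_left (p q : ℕ) (c : ℂ) (u v : Fin (2*(p-1)+q) → ℂ) :
    qcC (Sc' p q) (fun k => c * u k) v = c * qcC (Sc' p q) u v := by
  rw [qcC, qcC, Finset.mul_sum]
  refine Finset.sum_congr rfl (fun i _ => ?_)
  rw [Finset.mul_sum]
  refine Finset.sum_congr rfl (fun j _ => by ring)

lemma qcC_smul_right (p q : ℕ) (c : ℂ) (u v : Fin (2*(p-1)+q) → ℂ) :
    qcC (Sc' p q) u (fun k => c * v k) = star c * qcC (Sc' p q) u v := by
  rw [qcC, qcC, Finset.mul_sum]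
  refine Finset.sum_congr rfl (fun i _ => ?_)
  rw [Finset.mul_sum]
  refine Finset.sum_congr rfl (fun j _ => ?_)
  rw [star_mul']
  ring

lemma qcC_self (p q : ℕ) (u : Fin (2*(p-1)+q) → ℂ) :
    qcC (Sc' p q) u (fun j => u (sigF (p-1) q j)) =
      ((∑ j, Complex.normSq (u j) : ℝ) : ℂ) := by
  rw [qcC_eq]
  push_cast
  have h1 : ∀ j, u (sigF (p-1) q j) * star (u (sigF (p-1) q j)) =
      ((Complex.normSq (u (sigF (p-1) q j)) : ℝ) : ℂ) := fun j => Complex.mul_conj _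
  simp only [h1]
  exact Fintype.sum_equiv (Function.Involutive.toPerm _ (sigF_invol (p-1) q)) _ _ (fun x => rfl)

lemma emb1_zero_fun (p q : ℕ) : emb1 p q (fun _ => 0) = 0 := by
  funext i j
  simp [emb1]

lemma emb1_add (p q : ℕ) (u v : Fin (2*(p-1)+q) → ℂ) :
    emb1 p q (fun k => u k + v k) = emb1 p q u + emb1 p q v := by
  funext i j
  rw [Matrix.add_apply, emb1, emb1, emb1]
  split_ifs with h1 h2
  · rfl
  · simp only [star_add, add_mul, Finset.sum_add_distrib, neg_add]
  · simp

lemma emb1_smul_real (p q : ℕ) (r : ℝ) (u : Fin (2*(p-1)+q) → ℂ) :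
    emb1 p q (fun k => (r:ℂ) * u k) = r • emb1 p q u := by
  funext i j
  rw [Matrix.smul_apply, emb1, emb1]
  split_ifs with h1 h2
  · rw [Complex.real_smul]
  · rw [Complex.real_smul]
    simp only [star_mul', Complex.star_def, Complex.conj_ofReal]
    rw [mul_neg, Finset.mul_sum]
    congr 1
    refine Finset.sum_congr rfl (fun k _ => by ring)
  · simp

lemma emb2_zero (p q : ℕ) : emb2 p q 0 = 0 := by
  funext i j
  simp [emb2]

lemma emb2_add (p q : ℕ) (t s : ℝ) :
    emb2 p q (t + s) = emb2 p q t + emb2 p q s := by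
  funext i j
  rw [Matrix.add_apply, emb2, emb2, emb2]
  split_ifs
  · push_cast; ring
  · simp

lemma emb2_smul (p q : ℕ) (r t : ℝ) :
    emb2 p q (r * t) = r • emb2 p q t := by
  funext i j
  rw [Matrix.smul_apply, emb2, emb2]
  split_ifs
  · rw [Complex.real_smul]; push_cast; ring
  · simp

lemma decomp_inj (p q : ℕ) (hp : 1 ≤ p) (hq : 3 ≤ 2*p+q)
    {u v : Fin (2*(p-1)+q) → ℂ} {t s : ℝ}
    (h : emb1 p q u + emb2 p q t = emb1 p q v + emb2 p q s) : u = v ∧ t = s := by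
  have hj0 : (0:ℕ) < 2*p+q := by omega
  have hlast : 2*p+q-1 < 2*p+q := by omega
  constructor
  · funext k
    have hk := k.isLt
    have hk1 : (k:ℕ)+1 < 2*p+q := by omega
    have h2 := congrFun (congrFun h ⟨(k:ℕ)+1, hk1⟩) ⟨0, hj0⟩
    rw [Matrix.add_apply, Matrix.add_apply] at h2
    rw [emb1_col p q u ⟨(k:ℕ)+1, hk1⟩ ⟨0, hj0⟩ rfl (by show 1 ≤ (k:ℕ)+1; omega)
      (by show (k:ℕ)+1 ≤ 2*(p-1)+q; omega)] at h2
    rw [emb1_col p q v ⟨(k:ℕ)+1, hk1⟩ ⟨0, hj0⟩ rfl (by show 1 ≤ (k:ℕ)+1; omega)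
      (by show (k:ℕ)+1 ≤ 2*(p-1)+q; omega)] at h2
    rw [emb2, if_neg (fun hc => absurd (show (k:ℕ)+1 = 2*p+q-1 from hc.1) (by omega))] at h2
    rw [emb2, if_neg (fun hc => absurd (show (k:ℕ)+1 = 2*p+q-1 from hc.1) (by omega))] at h2
    rw [add_zero, add_zero] at h2
    exact h2
  · have h2 := congrFun (congrFun h ⟨2*p+q-1, hlast⟩) ⟨0, hj0⟩
    rw [Matrix.add_apply, Matrix.add_apply] at h2
    rw [emb1_zero p q u ⟨2*p+q-1, hlast⟩ ⟨0, hj0⟩ (by simp; omega) (by simp)] at h2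
    rw [emb1_zero p q v ⟨2*p+q-1, hlast⟩ ⟨0, hj0⟩ (by simp; omega) (by simp)] at h2
    rw [emb2, if_pos ⟨rfl, rfl⟩, emb2, if_pos ⟨rfl, rfl⟩, zero_add, zero_add] at h2
    have h3 := mul_right_cancel₀ Complex.I_ne_zero h2
    exact_mod_cast h3

lemma rel_entry (p q : ℕ) (X : Matrix (Fin (2*p+q)) (Fin (2*p+q)) ℂ) (i j : Fin (2*p+q)) :
    (X.conjTranspose * Sc p q + Sc p q * X) i j =
      star (X (sigF p q j) i) + X (sigF p q i) j := by
  rw [Matrix.add_apply, mul_Sc, Sc_mul, Matrix.conjTranspose_apply]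

lemma mul12 (p q : ℕ) (hp : 1 ≤ p) (hq : 3 ≤ 2*p+q) (u : Fin (2*(p-1)+q) → ℂ) (t : ℝ) :
    emb1 p q u * emb2 p q t = 0 := by
  funext i j
  rw [Matrix.mul_apply, Matrix.zero_apply]
  refine Finset.sum_eq_zero (fun k _ => ?_)
  have hk := k.isLt
  by_cases h : (k:ℕ) = 2*p+q-1 ∧ (j:ℕ) = 0
  · rw [emb1_zero p q u i k (by omega) (by omega), zero_mul]
  · rw [emb2, if_neg h, mul_zero]

lemma mul21 (p q : ℕ) (hp : 1 ≤ p) (hq : 3 ≤ 2*p+q) (u : Fin (2*(p-1)+q) → ℂ) (t : ℝ) :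
    emb2 p q t * emb1 p q u = 0 := by
  funext i j
  rw [Matrix.mul_apply, Matrix.zero_apply]
  refine Finset.sum_eq_zero (fun k _ => ?_)
  have hk := k.isLt
  by_cases h : (i:ℕ) = 2*p+q-1 ∧ (k:ℕ) = 0
  · rw [emb1_zero p q u k j (by omega) (by omega), mul_zero]
  · rw [emb2, if_neg h, zero_mul]

lemma mul22 (p q : ℕ) (hq : 3 ≤ 2*p+q) (t s : ℝ) :
    emb2 p q t * emb2 p q s = 0 := by
  funext i j
  rw [Matrix.mul_apply, Matrix.zero_apply]
  refine Finset.sum_eq_zero (fun k _ => ?_)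
  have hk := k.isLt
  by_cases h : (i:ℕ) = 2*p+q-1 ∧ (k:ℕ) = 0
  · have h2 : emb2 p q s k j = 0 := by
      rw [emb2]; exact if_neg (by omega)
    rw [h2, mul_zero]
  · rw [emb2, if_neg h, zero_mul]

lemma mul11_entry (p q : ℕ) (hp : 1 ≤ p) (hq : 3 ≤ 2*p+q)
    (u v : Fin (2*(p-1)+q) → ℂ) (i j : Fin (2*p+q)) :
    (emb1 p q u * emb1 p q v) i j =
      if (i:ℕ) = 2*p+q-1 ∧ (j:ℕ) = 0 then -star (qcC (Sc' p q) u v) else 0 := by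
  have hi := i.isLt
  have hj := j.isLt
  rw [Matrix.mul_apply]
  by_cases hij : (i:ℕ) = 2*p+q-1 ∧ (j:ℕ) = 0
  · rw [if_pos hij]
    rw [sum_shift (show (2*(p-1)+q) + 2 = 2*p+q by omega) _
      (fun m => -(star (u (sigF (p-1) q m)) * v m)) ?_ ?_]
    · rw [qcC_eq, star_sum]
      rw [← Finset.sum_neg_distrib]
      refine Finset.sum_congr rfl (fun m _ => ?_)
      rw [star_mul', star_star]
    · intro k hk
      have hk' := k.isLt
      rcases hk with hk | hk
      · rw [emb1_zero p q v k j (by omega) (by omega), mul_zero]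
      · rw [emb1_zero p q u i k (by omega) (by omega), zero_mul]
    · intro k h1 h2
      rw [emb1_row p q hp u i k hij.1 h1 h2, emb1_col p q v k j hij.2 h1 h2]
      rw [neg_mul]
  · rw [if_neg hij]
    refine Finset.sum_eq_zero (fun k _ => ?_)
    have hk := k.isLt
    by_cases hk0 : (k:ℕ) = 0
    · rw [emb1_zero p q v k j (by omega) (by omega), mul_zero]
    by_cases hkn : (k:ℕ) = 2*p+q-1
    · rw [emb1_zero p q u i k (by omega) (by omega), zero_mul]
    by_cases hi1 : (i:ℕ) = 2*p+q-1
    · rw [emb1_zero p q v k j (by omega) (by omega), mul_zero]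
    · rw [emb1_zero p q u i k (by omega) (by omega), zero_mul]

lemma comm11 (p q : ℕ) (hp : 1 ≤ p) (hq : 3 ≤ 2*p+q) (u v : Fin (2*(p-1)+q) → ℂ) :
    emb1 p q u * emb1 p q v - emb1 p q v * emb1 p q u =
      emb2 p q (2 * (qcC (Sc' p q) u v).im) := by
  funext i j
  rw [Matrix.sub_apply, mul11_entry p q hp hq u v i j, mul11_entry p q hp hq v u i j, emb2]
  split_ifs with h
  · rw [← star_qcC p q u v]
    have key : ∀ z : ℂ, -star z - -star (star z) = ((2 * z.im : ℝ) : ℂ) * Complex.I := by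
      intro z
      rw [star_star, show -star z - -z = z - star z by ring, Complex.star_def,
        Complex.sub_conj]
    exact key (qcC (Sc' p q) u v)
  · simp

lemma emb2_eq_zero (p q : ℕ) (hq : 3 ≤ 2*p+q) {s : ℝ} (h : emb2 p q s = 0) : s = 0 := by
  have h2 := congrFun (congrFun h ⟨2*p+q-1, by omega⟩) ⟨0, by omega⟩
  rw [emb2, if_pos ⟨rfl, rfl⟩, Matrix.zero_apply] at h2
  rcases mul_eq_zero.mp h2 with h3 | h3
  · exact_mod_cast h3
  · exact absurd h3 Complex.I_ne_zero

lemma prod_expand (p q : ℕ) (hp : 1 ≤ p) (hq : 3 ≤ 2*p+q)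
    (u v : Fin (2*(p-1)+q) → ℂ) (t s : ℝ) :
    (emb1 p q u + emb2 p q t) * (emb1 p q v + emb2 p q s) = emb1 p q u * emb1 p q v := by
  rw [add_mul, mul_add, mul_add, mul12 p q hp hq u s, mul21 p q hp hq v t,
    mul22 p q hq t s, add_zero, add_zero, add_zero]

lemma comm_expand (p q : ℕ) (hp : 1 ≤ p) (hq : 3 ≤ 2*p+q)
    (u v : Fin (2*(p-1)+q) → ℂ) (t s : ℝ) :
    (emb1 p q u + emb2 p q t) * (emb1 p q v + emb2 p q s) -
      (emb1 p q v + emb2 p q s) * (emb1 p q u + emb2 p q t) =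
      emb2 p q (2 * (qcC (Sc' p q) u v).im) := by
  rw [prod_expand p q hp hq u v t s, prod_expand p q hp hq v u s t, comm11 p q hp hq u v]

lemma emb2_mem (p q : ℕ) (hp : 1 ≤ p) (hq : 3 ≤ 2*p+q) (t : ℝ) :
    emb2 p q t ∈ Gset p q := by
  constructor
  · rw [Matrix.trace]
    refine Finset.sum_eq_zero (fun i _ => ?_)
    have hi := i.isLt
    show emb2 p q t i i = 0
    rw [emb2]; exact if_neg (by omega)
  · funext i j
    rw [rel_entry, Matrix.zero_apply]
    have hi := i.isLt
    have hj := j.isLt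
    have hvi : ((sigF p q i):ℕ) = sigN p q (i:ℕ) := rfl
    have hvj : ((sigF p q j):ℕ) = sigN p q (j:ℕ) := rfl
    by_cases hij : (i:ℕ) = 0 ∧ (j:ℕ) = 0
    · have hsj : sigN p q (j:ℕ) = 2*p+q-1 := by rw [hij.2]; exact sigN_zero p q hp
      have hsi : sigN p q (i:ℕ) = 2*p+q-1 := by rw [hij.1]; exact sigN_zero p q hp
      have e1 : emb2 p q t (sigF p q j) i = (t:ℂ) * Complex.I := by
        rw [emb2]; exact if_pos ⟨by omega, hij.1⟩
      have e2 : emb2 p q t (sigF p q i) j = (t:ℂ) * Complex.I := by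
        rw [emb2]; exact if_pos ⟨by omega, hij.2⟩
      rw [e1, e2, star_mul', Complex.star_def, Complex.conj_I, Complex.conj_ofReal]
      ring
    · have e1 : emb2 p q t (sigF p q j) i = 0 := by
        rw [emb2]
        refine if_neg (fun hc => ?_)
        have h1 : sigN p q (j:ℕ) = 2*p+q-1 := by rw [← hvj]; exact hc.1
        have h2 : (j:ℕ) = 0 := by
          revert h1; simp only [sigN]; split_ifs <;> omega
        exact hij ⟨hc.2, h2⟩
      have e2 : emb2 p q t (sigF p q i) j = 0 := by
        rw [emb2]
        refine if_neg (fun hc => ?_)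
        have h1 : sigN p q (i:ℕ) = 2*p+q-1 := by rw [← hvi]; exact hc.1
        have h2 : (i:ℕ) = 0 := by
          revert h1; simp only [sigN]; split_ifs <;> omega
        exact hij ⟨h2, hc.2⟩
      rw [e1, e2]
      simp

lemma P2m_decomp (p q : ℕ) (hp : 1 ≤ p) (hq : 3 ≤ 2*p+q)
    (u : Fin (2*(p-1)+q) → ℂ) (t : ℝ) :
    P2m p q (emb1 p q u + emb2 p q t) = emb2 p q t := by
  funext i j
  have hi := i.isLt
  have hj := j.isLt
  simp only [P2m, emb2, Matrix.add_apply]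
  split_ifs with h
  · rw [emb1_zero p q u i j (by omega) (by omega), zero_add]
    simp
  · rfl

lemma P1m_decomp (p q : ℕ) (hp : 1 ≤ p) (hq : 3 ≤ 2*p+q)
    (u : Fin (2*(p-1)+q) → ℂ) (t : ℝ) :
    P1m p q (emb1 p q u + emb2 p q t) = emb1 p q u := by
  rw [P1m, P2m_decomp p q hp hq u t]
  exact add_sub_cancel_right _ _

lemma emb1_mem (p q : ℕ) (hp : 1 ≤ p) (hq : 3 ≤ 2*p+q) (u : Fin (2*(p-1)+q) → ℂ) :
    emb1 p q u ∈ Gset p q := by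
  constructor
  · rw [Matrix.trace]
    refine Finset.sum_eq_zero (fun i _ => ?_)
    have hi := i.isLt
    show emb1 p q u i i = 0
    exact emb1_zero p q u i i (by omega) (by omega)
  · funext i j
    rw [rel_entry, Matrix.zero_apply]
    have hi := i.isLt
    have hj := j.isLt
    have hvi : ((sigF p q i):ℕ) = sigN p q (i:ℕ) := rfl
    have hvj : ((sigF p q j):ℕ) = sigN p q (j:ℕ) := rfl
    rcases (show (j:ℕ) = 0 ∨ (1 ≤ (j:ℕ) ∧ (j:ℕ) ≤ 2*(p-1)+q) ∨ (j:ℕ) = 2*p+q-1 by omega)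
      with hj' | hj' | hj'
    · have hsj : sigN p q (j:ℕ) = 2*p+q-1 := by rw [hj']; exact sigN_zero p q hp
      rcases (show (i:ℕ) = 0 ∨ (1 ≤ (i:ℕ) ∧ (i:ℕ) ≤ 2*(p-1)+q) ∨ (i:ℕ) = 2*p+q-1 by omega)
        with hi' | hi' | hi'
      · have hsi : sigN p q (i:ℕ) = 2*p+q-1 := by rw [hi']; exact sigN_zero p q hp
        rw [emb1_zero p q u (sigF p q j) i (by omega) (by omega),
          emb1_zero p q u (sigF p q i) j (by omega) (by omega)]
        simp
      · have hsi := sigN_mid p q (i:ℕ) hp hi'.1 hi'.2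
        have hshift := sigN_shift p q (i:ℕ) hp hi'.1 hi'.2
        rw [emb1_row p q hp u (sigF p q j) i (by omega) hi'.1 hi'.2,
          emb1_col p q u (sigF p q i) j hj' (by omega) (by omega),
          star_neg, star_star]
        exact neg_add_eq_zero.mpr (congrArg u (Fin.ext (by
          show sigN (p-1) q ((i:ℕ)-1) = sigN p q (i:ℕ) - 1
          omega)))
      · have hsi : sigN p q (i:ℕ) = 0 := by rw [hi']; exact sigN_last p q hp
        rw [emb1_zero p q u (sigF p q j) i (by omega) (by omega),
          emb1_zero p q u (sigF p q i) j (by omega) (by omega)]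
        simp
    · have hsj := sigN_mid p q (j:ℕ) hp hj'.1 hj'.2
      have hshiftj := sigN_shift p q (j:ℕ) hp hj'.1 hj'.2
      rcases (show (i:ℕ) = 0 ∨ (1 ≤ (i:ℕ) ∧ (i:ℕ) ≤ 2*(p-1)+q) ∨ (i:ℕ) = 2*p+q-1 by omega)
        with hi' | hi' | hi'
      · have hsi : sigN p q (i:ℕ) = 2*p+q-1 := by rw [hi']; exact sigN_zero p q hp
        rw [emb1_col p q u (sigF p q j) i hi' (by omega) (by omega),
          emb1_row p q hp u (sigF p q i) j (by omega) hj'.1 hj'.2]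
        exact add_neg_eq_zero.mpr (congrArg star (congrArg u (Fin.ext (by
          show sigN p q (j:ℕ) - 1 = sigN (p-1) q ((j:ℕ)-1)
          omega))))
      · have hsi := sigN_mid p q (i:ℕ) hp hi'.1 hi'.2
        rw [emb1_zero p q u (sigF p q j) i (by omega) (by omega),
          emb1_zero p q u (sigF p q i) j (by omega) (by omega)]
        simp
      · have hsi : sigN p q (i:ℕ) = 0 := by rw [hi']; exact sigN_last p q hp
        rw [emb1_zero p q u (sigF p q j) i (by omega) (by omega),
          emb1_zero p q u (sigF p q i) j (by omega) (by omega)]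
        simp
    · have hsj : sigN p q (j:ℕ) = 0 := by rw [hj']; exact sigN_last p q hp
      rcases (show (i:ℕ) = 0 ∨ (1 ≤ (i:ℕ) ∧ (i:ℕ) ≤ 2*(p-1)+q) ∨ (i:ℕ) = 2*p+q-1 by omega)
        with hi' | hi' | hi'
      · have hsi : sigN p q (i:ℕ) = 2*p+q-1 := by rw [hi']; exact sigN_zero p q hp
        rw [emb1_zero p q u (sigF p q j) i (by omega) (by omega),
          emb1_zero p q u (sigF p q i) j (by omega) (by omega)]
        simp
      · have hsi := sigN_mid p q (i:ℕ) hp hi'.1 hi'.2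
        rw [emb1_zero p q u (sigF p q j) i (by omega) (by omega),
          emb1_zero p q u (sigF p q i) j (by omega) (by omega)]
        simp
      · have hsi : sigN p q (i:ℕ) = 0 := by rw [hi']; exact sigN_last p q hp
        rw [emb1_zero p q u (sigF p q j) i (by omega) (by omega),
          emb1_zero p q u (sigF p q i) j (by omega) (by omega)]
        simp

lemma trace2 (p q : ℕ) (hq : 3 ≤ 2*p+q) (t s : ℝ) :
    Matrix.trace (emb2 p q t * (emb2 p q s).conjTranspose) = ((t*s : ℝ) : ℂ) := by
  obtain ⟨L, hL⟩ : ∃ L : Fin (2*p+q), (L:ℕ) = 2*p+q-1 := ⟨⟨2*p+q-1, by omega⟩, rfl⟩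
  obtain ⟨Z, hZ⟩ : ∃ Z : Fin (2*p+q), (Z:ℕ) = 0 := ⟨⟨0, by omega⟩, rfl⟩
  rw [Matrix.trace]
  rw [Finset.sum_eq_single L]
  · show (emb2 p q t * (emb2 p q s).conjTranspose) L L = _
    rw [Matrix.mul_apply]
    rw [Finset.sum_eq_single Z]
    · rw [Matrix.conjTranspose_apply]
      rw [emb2, if_pos ⟨hL, hZ⟩]
      rw [emb2, if_pos ⟨hL, hZ⟩]
      rw [star_mul', Complex.star_def, Complex.conj_I, Complex.conj_ofReal]
      ring_nf
      rw [Complex.I_sq]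
      push_cast
      ring
    · intro k _ hk
      have e1 : emb2 p q t L k = 0 := by
        rw [emb2]
        exact if_neg (fun hc => hk (Fin.ext (by rw [hc.2, hZ])))
      rw [e1, zero_mul]
    · simp
  · intro i _ hi
    show (emb2 p q t * (emb2 p q s).conjTranspose) i i = 0
    rw [Matrix.mul_apply]
    refine Finset.sum_eq_zero (fun k _ => ?_)
    have e1 : emb2 p q t i k = 0 := by
      rw [emb2]
      exact if_neg (fun hc => hi (Fin.ext (by rw [hc.1, hL])))
    rw [e1, zero_mul]
  · simp

lemma trace1 (p q : ℕ) (hp : 1 ≤ p) (hq : 3 ≤ 2*p+q) (u v : Fin (2*(p-1)+q) → ℂ) :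
    Matrix.trace (emb1 p q u * Sc p q * (emb1 p q v).conjTranspose) =
      star (qcC (Sc' p q) u v) := by
  obtain ⟨L, hL⟩ : ∃ L : Fin (2*p+q), (L:ℕ) = 2*p+q-1 := ⟨⟨2*p+q-1, by omega⟩, rfl⟩
  rw [Matrix.trace]
  rw [Finset.sum_eq_single L]
  · show ((emb1 p q u * Sc p q) * (emb1 p q v).conjTranspose) L L = _
    rw [Matrix.mul_apply]
    rw [sum_shift (show 2*(p-1)+q+2 = 2*p+q by omega) _
      (fun m => star (u m) * v (sigF (p-1) q m)) ?_ ?_]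
    · rw [qcC_eq', star_sum]
      refine Finset.sum_congr rfl (fun m _ => ?_)
      rw [star_mul', star_star]
    · intro k hk
      have hk' := k.isLt
      rw [Matrix.conjTranspose_apply, mul_Sc]
      have hvk : ((sigF p q k):ℕ) = sigN p q (k:ℕ) := rfl
      rcases hk with hk | hk
      · rw [emb1_zero p q v L k (by omega) (by omega), star_zero, mul_zero]
      · have hsk : sigN p q (k:ℕ) = 0 := by rw [hk]; exact sigN_last p q hp
        rw [emb1_zero p q u L (sigF p q k) (by omega) (by omega), zero_mul]
    · intro k h1 h2
      rw [Matrix.conjTranspose_apply, mul_Sc]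
      have hvk : ((sigF p q k):ℕ) = sigN p q (k:ℕ) := rfl
      have hmk := sigN_mid p q (k:ℕ) hp h1 h2
      have hsh := sigN_shift p q (k:ℕ) hp h1 h2
      rw [emb1_row p q hp u L (sigF p q k) hL (by omega) (by omega),
        emb1_row p q hp v L k hL h1 h2,
        star_neg, star_star, neg_mul_neg]
      have key : ∀ (a b w : Fin (2*(p-1)+q)), (a:ℕ) = (b:ℕ) →
          star (u a) * v w = star (u b) * v w := by
        intro a b w h
        rw [Fin.ext h]
      refine key _ _ _ ?_
      show sigN (p-1) q (sigN p q (k:ℕ) - 1) = (k:ℕ) - 1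
      rw [show sigN p q (k:ℕ) - 1 = sigN (p-1) q ((k:ℕ)-1) by omega]
      exact sigN_invol (p-1) q ((k:ℕ)-1) (by omega)
  · intro i _ hi
    have hi' := i.isLt
    have hiv : (i:ℕ) ≠ 2*p+q-1 := fun hc => hi (Fin.ext (by rw [hc, hL]))
    show ((emb1 p q u * Sc p q) * (emb1 p q v).conjTranspose) i i = 0
    rw [Matrix.mul_apply]
    refine Finset.sum_eq_zero (fun k _ => ?_)
    have hk' := k.isLt
    rw [Matrix.conjTranspose_apply, mul_Sc]
    have hvk : ((sigF p q k):ℕ) = sigN p q (k:ℕ) := rfl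
    by_cases hk0 : (k:ℕ) = 0
    · have hsk : sigN p q (k:ℕ) = 2*p+q-1 := by rw [hk0]; exact sigN_zero p q hp
      rw [emb1_zero p q u i (sigF p q k) (by omega) (by omega), zero_mul]
    · rw [emb1_zero p q v i k (by omega) (by omega), star_zero, mul_zero]
  · simp

lemma BM_formula (p q : ℕ) (hp : 1 ≤ p) (hq : 3 ≤ 2*p+q)
    (u v : Fin (2*(p-1)+q) → ℂ) (t s : ℝ) :
    BM p q (emb1 p q u + emb2 p q t) (emb1 p q v + emb2 p q s) =
      2 * (qcC (Sc' p q) u v).re + t * s := by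
  rw [BM, P1m_decomp p q hp hq u t, P1m_decomp p q hp hq v s,
    P2m_decomp p q hp hq u t, P2m_decomp p q hp hq v s,
    trace1 p q hp hq u v, trace2 p q hq t s]
  rw [Complex.ofReal_re, Complex.star_def, Complex.conj_re]

lemma emb1_as_sum (p q : ℕ) (u : Fin (2*(p-1)+q) → ℂ) :
    emb1 p q u = emb1 p q u + emb2 p q 0 := by
  rw [emb2_zero, add_zero]

lemma emb2_as_sum (p q : ℕ) (t : ℝ) :
    emb2 p q t = emb1 p q (fun _ => 0) + emb2 p q t := by
  rw [emb1_zero_fun, zero_add]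

lemma BM_emb2_emb2 (p q : ℕ) (hp : 1 ≤ p) (hq : 3 ≤ 2*p+q) (t s : ℝ) :
    BM p q (emb2 p q t) (emb2 p q s) = t * s := by
  rw [emb2_as_sum p q t, emb2_as_sum p q s, BM_formula p q hp hq _ _ t s,
    qcC_zero_left p q _]
  simp

lemma BM_emb1_emb1 (p q : ℕ) (hp : 1 ≤ p) (hq : 3 ≤ 2*p+q) (u v : Fin (2*(p-1)+q) → ℂ) :
    BM p q (emb1 p q u) (emb1 p q v) = 2 * (qcC (Sc' p q) u v).re := by
  rw [emb1_as_sum p q u, emb1_as_sum p q v, BM_formula p q hp hq u v 0 0]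
  ring

lemma qcC_wre (p q : ℕ) (u : Fin (2*(p-1)+q) → ℂ) :
    (qcC (Sc' p q) u (fun j => u (sigF (p-1) q j))).re = ∑ j, Complex.normSq (u j) := by
  rw [qcC_self]
  exact Complex.ofReal_re _

lemma qcC_wim (p q : ℕ) (u : Fin (2*(p-1)+q) → ℂ) :
    (qcC (Sc' p q) u (fun j => Complex.I * u (sigF (p-1) q j))).im =
      -∑ j, Complex.normSq (u j) := by
  rw [qcC_smul_right p q Complex.I u (fun j => u (sigF (p-1) q j)), qcC_self]
  simp [Complex.star_def, Complex.conj_I]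

lemma sum_normSq_zero {n : ℕ} {u : Fin n → ℂ}
    (h : ∑ j, Complex.normSq (u j) = 0) : u = fun _ => 0 := by
  have h2 := (Finset.sum_eq_zero_iff_of_nonneg
    (fun j _ => Complex.normSq_nonneg (u j))).mp h
  funext k
  exact Complex.normSq_eq_zero.mp (h2 k (Finset.mem_univ k))

lemma re_neg_tI (t : ℝ) (z : ℂ) : (-((t:ℂ) * Complex.I) * z).re = t * z.im := by
  simp [Complex.mul_re]

def Jm (p q : ℕ) (hp : 1 ≤ p) (hq : 3 ≤ 2*p+q) :
    Matrix (Fin (2*p+q)) (Fin (2*p+q)) ℂ → Matrix (Fin (2*p+q)) (Fin (2*p+q)) ℂ →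
      Matrix (Fin (2*p+q)) (Fin (2*p+q)) ℂ := fun Z X =>
  emb1 p q (fun k => -(Z ⟨2*p+q-1, by omega⟩ ⟨0, by omega⟩) *
    X ⟨(k:ℕ)+1, by have := k.isLt; omega⟩ ⟨0, by omega⟩)

lemma Jm_apply (p q : ℕ) (hp : 1 ≤ p) (hq : 3 ≤ 2*p+q) (t : ℝ)
    (w : Fin (2*(p-1)+q) → ℂ) :
    Jm p q hp hq (emb2 p q t) (emb1 p q w) =
      emb1 p q (fun k => -((t:ℂ) * Complex.I) * w k) := by
  unfold Jm
  refine congrArg (emb1 p q) (funext fun k => ?_)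
  have hk := k.isLt
  rw [emb2, if_pos ⟨rfl, rfl⟩]
  rw [emb1_col p q w _ _ rfl (by show 1 ≤ (k:ℕ)+1; omega)
    (by show (k:ℕ)+1 ≤ 2*(p-1)+q; omega)]
  exact congrArg _ (congrArg w (Fin.ext rfl))

lemma Jm_prop2 (p q : ℕ) (hp : 1 ≤ p) (hq : 3 ≤ 2*p+q) (t : ℝ)
    (u v : Fin (2*(p-1)+q) → ℂ) :
    BM p q (Jm p q hp hq (emb2 p q t) (emb1 p q u)) (emb1 p q v) =
      BM p q (emb2 p q t) (emb1 p q u * emb1 p q v - emb1 p q v * emb1 p q u) := by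
  rw [Jm_apply p q hp hq t u, comm11 p q hp hq u v,
    BM_emb1_emb1 p q hp hq _ v, BM_emb2_emb2 p q hp hq _ _,
    qcC_smul_left p q _ u v, re_neg_tI]
  ring

lemma Jm_sq (p q : ℕ) (hp : 1 ≤ p) (hq : 3 ≤ 2*p+q) (t : ℝ)
    (u : Fin (2*(p-1)+q) → ℂ) :
    Jm p q hp hq (emb2 p q t) (Jm p q hp hq (emb2 p q t) (emb1 p q u)) =
      (-(BM p q (emb2 p q t) (emb2 p q t))) • emb1 p q u := by
  rw [Jm_apply p q hp hq t u, Jm_apply p q hp hq t _, BM_emb2_emb2 p q hp hq t t,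
    ← emb1_smul_real p q (-(t*t)) u]
  refine congrArg (emb1 p q) (funext fun k => ?_)
  show -((t:ℂ) * Complex.I) * (-((t:ℂ) * Complex.I) * u k) = ((-(t*t) : ℝ):ℂ) * u k
  push_cast
  ring_nf
  rw [Complex.I_sq]
  ring

end Aux

/-- the sets `𝔤₋₁`, `𝔤₋₂` lie in `𝔤 ≅ 𝔰𝔲(p+q,p)`;
`𝔤₋ = 𝔤₋₂ ⊕ 𝔤₋₁` is a Lie subalgebra of `𝔤` with `⁅𝔤₋,𝔤₋⁆ ⊆ 𝔤₋₂` and `𝔤₋₂`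
central; `(𝔤₋, ⟨·|·⟩)` is a pseudo H-type Lie algebra; and there is a Lie
algebra isomorphism of `𝔥⁽¹⁾(ℂ, S_{p-1,q})` onto `𝔤₋` that is an isometry. -/
theorem stmt9 (p q : ℕ) (hp : 1 ≤ p) (hpq : 3 ≤ 2*p+q) :
    -- 𝔤₋₁ and 𝔤₋₂ consist of elements of 𝔤, and hence so does 𝔤₋
    (∀ u, emb1 p q u ∈ Gset p q) ∧
    (∀ t, emb2 p q t ∈ Gset p q) ∧
    -- 𝔤₋ is a Lie subalgebra with ⁅𝔤₋,𝔤₋⁆ ⊆ 𝔤₋₂ and 𝔤₋₂ central in 𝔤₋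
    (∀ X ∈ gneg p q, ∀ Y ∈ gneg p q, ∃ t : ℝ, X * Y - Y * X = emb2 p q t) ∧
    (∀ t, ∀ X ∈ gneg p q, emb2 p q t * X - X * emb2 p q t = 0) ∧
    -- the center of 𝔤₋ is exactly 𝔤₋₂
    (∀ X ∈ gneg p q,
      ((∀ Y ∈ gneg p q, X * Y - Y * X = 0) ↔ ∃ t : ℝ, X = emb2 p q t)) ∧
    -- the scalar product is symmetric and non-degenerate on 𝔤₋
    (∀ X ∈ gneg p q, ∀ Y ∈ gneg p q, BM p q X Y = BM p q Y X) ∧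
    (∀ X ∈ gneg p q, (∀ Y ∈ gneg p q, BM p q X Y = 0) → X = 0) ∧
    -- its restriction to 𝔤₋₂ is non-degenerate
    (∀ t : ℝ, (∀ s : ℝ, BM p q (emb2 p q t) (emb2 p q s) = 0) → emb2 p q t = 0) ∧
    -- 𝔤₋₁ is the orthogonal complement of 𝔤₋₂ in 𝔤₋
    (∀ X ∈ gneg p q,
      ((∃ u, X = emb1 p q u) ↔ ∀ t : ℝ, BM p q X (emb2 p q t) = 0)) ∧
    -- pseudo H-type: the maps J_z satisfy the Clifford condition
    (∃ J : Matrix (Fin (2*p+q)) (Fin (2*p+q)) ℂ →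
        Matrix (Fin (2*p+q)) (Fin (2*p+q)) ℂ →
        Matrix (Fin (2*p+q)) (Fin (2*p+q)) ℂ,
      ∀ (t : ℝ) (u : Fin (2*(p-1)+q) → ℂ),
        (∃ u', J (emb2 p q t) (emb1 p q u) = emb1 p q u') ∧
        (∀ v, BM p q (J (emb2 p q t) (emb1 p q u)) (emb1 p q v) =
          BM p q (emb2 p q t)
            (emb1 p q u * emb1 p q v - emb1 p q v * emb1 p q u)) ∧
        J (emb2 p q t) (J (emb2 p q t) (emb1 p q u)) =
          (-(BM p q (emb2 p q t) (emb2 p q t))) • emb1 p q u) ∧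
    -- the isomorphism with 𝔥⁽¹⁾(ℂ, S_{p-1,q})
    (∃ φ : ((Fin (2*(p-1)+q) → ℂ) × ℝ) → Matrix (Fin (2*p+q)) (Fin (2*p+q)) ℂ,
      IsLinearMap ℝ φ ∧ Function.Injective φ ∧ Set.range φ = gneg p q ∧
      (∀ a b, φ (brM p q a b) = φ a * φ b - φ b * φ a) ∧
      (∀ a b, BM p q (φ a) (φ b) = BMc p q a b)) := by

  have hc4 : ∀ t, ∀ X ∈ gneg p q, emb2 p q t * X - X * emb2 p q t = 0 := by
    rintro t X ⟨v, s, rfl⟩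
    rw [mul_add, add_mul, mul21 p q hp hpq v t, mul12 p q hp hpq v t,
      mul22 p q hpq t s, mul22 p q hpq s t]
    simp
  refine ⟨fun u => emb1_mem p q hp hpq u, fun t => emb2_mem p q hp hpq t,
    ?_, hc4, ?_, ?_, ?_, ?_, ?_, ?_, ?_⟩
  · -- bracket lands in 𝔤₋₂
    rintro X ⟨u, t, rfl⟩ Y ⟨v, s, rfl⟩
    exact ⟨2 * (qcC (Sc' p q) u v).im, comm_expand p q hp hpq u v t s⟩
  · -- center
    rintro X ⟨u, t, rfl⟩
    constructor
    · intro hcomm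
      have h := hcomm (emb1 p q (fun j => Complex.I * u (sigF (p-1) q j)) + emb2 p q 0)
        ⟨_, _, rfl⟩
      rw [comm_expand p q hp hpq u _ t 0] at h
      have h0 := emb2_eq_zero p q hpq h
      have him := qcC_wim p q u
      have hsum : ∑ j, Complex.normSq (u j) = 0 := by
        rw [him] at h0; linarith
      have hu := sum_normSq_zero hsum
      exact ⟨t, by rw [hu, emb1_zero_fun, zero_add]⟩
    · rintro ⟨t', ht'⟩ Y hY
      rw [ht']
      exact hc4 t' Y hY
  · -- symmetry
    rintro X ⟨u, t, rfl⟩ Y ⟨v, s, rfl⟩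
    rw [BM_formula p q hp hpq u v t s, BM_formula p q hp hpq v u s t]
    have hre : (qcC (Sc' p q) v u).re = (qcC (Sc' p q) u v).re := by
      rw [← star_qcC p q u v, Complex.star_def, Complex.conj_re]
    rw [hre]
    ring
  · -- non-degeneracy on 𝔤₋
    rintro X ⟨u, t, rfl⟩ hall
    have h1 := hall (emb1 p q (fun _ => 0) + emb2 p q 1) ⟨_, _, rfl⟩
    rw [BM_formula p q hp hpq u _ t 1, qcC_zero_right p q u] at h1
    have ht : t = 0 := by simpa using h1
    have h2 := hall (emb1 p q (fun j => u (sigF (p-1) q j)) + emb2 p q 0) ⟨_, _, rfl⟩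
    rw [BM_formula p q hp hpq u _ t 0] at h2
    have hre := qcC_wre p q u
    have hsum : ∑ j, Complex.normSq (u j) = 0 := by
      rw [hre] at h2; nlinarith [h2]
    have hu := sum_normSq_zero hsum
    rw [hu, ht, emb1_zero_fun, emb2_zero, add_zero]
  · -- non-degeneracy on 𝔤₋₂
    intro t hall
    have h := hall 1
    rw [BM_emb2_emb2 p q hp hpq t 1] at h
    have ht : t = 0 := by linarith
    rw [ht, emb2_zero]
  · -- orthogonal complement
    rintro X ⟨u, t, rfl⟩
    constructor
    · rintro ⟨u', hu'⟩ t'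
      have hd : emb1 p q u + emb2 p q t = emb1 p q u' + emb2 p q 0 := by
        rw [emb2_zero, add_zero]; exact hu'
      obtain ⟨hu, ht⟩ := decomp_inj p q hp hpq hd
      rw [emb2_as_sum p q t', BM_formula p q hp hpq u _ t t', qcC_zero_right p q u, ht]
      simp
    · intro hall
      have h := hall 1
      rw [emb2_as_sum p q 1, BM_formula p q hp hpq u _ t 1, qcC_zero_right p q u] at h
      have ht : t = 0 := by simpa using h
      exact ⟨u, by rw [ht, emb2_zero, add_zero]⟩
  · -- J maps
    refine ⟨Jm p q hp hpq, fun t u => ⟨⟨fun k => -((t:ℂ) * Complex.I) * u k,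
      Jm_apply p q hp hpq t u⟩, fun v => Jm_prop2 p q hp hpq t u v,
      Jm_sq p q hp hpq t u⟩⟩
  · -- the isomorphism
    refine ⟨fun a => emb1 p q a.1 + emb2 p q (-a.2), ⟨?_, ?_⟩, ?_, ?_, ?_, ?_⟩
    · intro a b
      show emb1 p q (a + b).1 + emb2 p q (-(a + b).2) = _
      have e1 : emb1 p q (a + b).1 = emb1 p q a.1 + emb1 p q b.1 :=
        emb1_add p q a.1 b.1
      have e2 : emb2 p q (-(a + b).2) = emb2 p q (-a.2) + emb2 p q (-b.2) := by
        rw [show -(a + b).2 = -a.2 + -b.2 from by show -(a.2 + b.2) = _; ring]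
        exact emb2_add p q _ _
      rw [e1, e2]
      abel
    · intro r a
      show emb1 p q (r • a).1 + emb2 p q (-(r • a).2) =
        r • (emb1 p q a.1 + emb2 p q (-a.2))
      have e1 : emb1 p q (r • a).1 = r • emb1 p q a.1 := by
        rw [show (r • a).1 = fun k => (r:ℂ) * a.1 k from
          funext fun k => Complex.real_smul]
        exact emb1_smul_real p q r a.1
      have e2 : emb2 p q (-(r • a).2) = r • emb2 p q (-a.2) := by
        rw [show -(r • a).2 = r * (-a.2) from by show -(r * a.2) = _; ring]
        exact emb2_smul p q r (-a.2)
      rw [e1, e2, smul_add]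
    · intro a b hab
      obtain ⟨h1, h2⟩ := decomp_inj p q hp hpq hab
      exact Prod.ext h1 (neg_inj.mp h2)
    · ext X
      constructor
      · rintro ⟨a, rfl⟩
        exact ⟨a.1, -a.2, rfl⟩
      · rintro ⟨u, t, rfl⟩
        refine ⟨(u, -t), ?_⟩
        show emb1 p q u + emb2 p q (-(-t)) = emb1 p q u + emb2 p q t
        rw [neg_neg]
    · intro a b
      show emb1 p q (brM p q a b).1 + emb2 p q (-(brM p q a b).2) = _
      rw [comm_expand p q hp hpq a.1 b.1 (-a.2) (-b.2)]
      rw [show emb1 p q (brM p q a b).1 = 0 from emb1_zero_fun p q, zero_add]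
      refine congrArg (emb2 p q) ?_
      show -((qcC (Sc' p q) b.1 a.1 - qcC (Sc' p q) a.1 b.1).im) =
        2 * (qcC (Sc' p q) a.1 b.1).im
      rw [← star_qcC p q a.1 b.1, Complex.sub_im, Complex.star_def, Complex.conj_im]
      ring
    · intro a b
      show BM p q (emb1 p q a.1 + emb2 p q (-a.2)) (emb1 p q b.1 + emb2 p q (-b.2)) =
        BMc p q a b
      rw [BM_formula p q hp hpq a.1 b.1 (-a.2) (-b.2), BMc]
      ring
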